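/- arXiv:0709.1563 — 2 statements merged into one kernel-verified Lean document; each statement's English description precedes it below -/
import Mathlib

section
/- Let A be a p×L complex matrix, Q a p×p positive semidefinite Hermitian matrix, and Z an L×L positive semidefinite Hermitian matrix satisfying Q = A·Z·Aᴴ. If the number of nonzero rows of Z is at most the Kruskal rank σ(A), then rank(Z) = rank(Q). -/
open Matrix Set
open scoped ComplexOrder

/-
Factor `Z = C Cᴴ`, so that `Q = (A C)(A C)ᴴ` and it suffices to show `rank (A C) = rank C`,
i.e. that `A` is injective on the range of `C`. A row of `C` vanishes as soon as the corresponding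
row of `Z` does (its squared norm is a diagonal entry of `Z`), so every vector `C x` is supported
on the nonzero rows of `Z`. There are at most `σ(A)` of them, and any `σ(A)` columns of `A` are
linearly independent, so `A (C x) = 0` forces `C x = 0`.
-/

/-- The Kruskal rank of a matrix `A`: the maximal number `q` such that every
set of `q` columns of `A` is linearly independent. -/
noncomputable def kruskalRank {p L : ℕ} (A : Matrix (Fin p) (Fin L) ℂ) : ℕ :=
  sSup {q | q ≤ L ∧ ∀ S : Finset (Fin L), S.card = q →
    LinearIndependent ℂ (fun j : S => A.transpose (j : Fin L))}

namespace Matrix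

variable {m n K : Type*} [Fintype n] [Field K]

theorem rank_mul_eq_right_of_mulVec_eq_zero {l : Type*} [Fintype m] (A : Matrix l m K)
    (B : Matrix m n K) (h : ∀ x, A *ᵥ (B *ᵥ x) = 0 → B *ᵥ x = 0) :
    (A * B).rank = B.rank := by
  have hker : LinearMap.ker (A * B).mulVecLin = LinearMap.ker B.mulVecLin := by
    ext x
    simp only [LinearMap.mem_ker, mulVecLin_apply, ← mulVec_mulVec]
    exact ⟨h x, fun hx => by rw [hx, mulVec_zero]⟩
  have hAB := LinearMap.finrank_range_add_finrank_ker (A * B).mulVecLin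
  have hB := LinearMap.finrank_range_add_finrank_ker B.mulVecLin
  rw [hker] at hAB
  exact Nat.add_right_cancel (hAB.trans hB.symm)

theorem eq_zero_of_mulVec_eq_zero_of_linearIndepOn {M : Matrix m n K} {s : Finset n}
    (hM : LinearIndepOn K Mᵀ (s : Set n)) {v : n → K} (hvs : ∀ k ∉ s, v k = 0)
    (hMv : M *ᵥ v = 0) : v = 0 := by
  have hsum : ∑ i ∈ s, v i • Mᵀ i = 0 := by
    rw [Finset.sum_subset s.subset_univ fun k _ hk => by rw [hvs k hk, zero_smul], ← hMv]
    ext i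
    simp [mulVec, dotProduct, mul_comm]
  funext k
  by_cases hk : k ∈ s
  · exact linearIndepOn_finset_iff.mp hM v hsum k hk
  · exact hvs k hk

theorem row_eq_zero_of_self_mul_conjTranspose_apply_self_eq_zero [PartialOrder K] [StarRing K]
    [StarOrderedRing K] {C : Matrix m n K} {k : m} (h : (C * Cᴴ) k k = 0) : C k = 0 :=
  dotProduct_self_star_eq_zero.mp h

end Matrix

theorem linearIndepOn_transpose_of_card_le_kruskalRank {p L : ℕ} (A : Matrix (Fin p) (Fin L) ℂ)
    {S : Finset (Fin L)} (hS : S.card ≤ kruskalRank A) :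
    LinearIndepOn ℂ Aᵀ (S : Set (Fin L)) := by
  have hmem : kruskalRank A ∈ {q | q ≤ L ∧ ∀ T : Finset (Fin L), T.card = q →
      LinearIndependent ℂ (fun j : T => Aᵀ (j : Fin L))} :=
    Nat.sSup_mem ⟨0, Nat.zero_le _, fun T hT => by
        rw [Finset.card_eq_zero.mp hT]; exact linearIndependent_empty_type⟩
      ⟨L, fun q hq => hq.1⟩
  obtain ⟨T, hST, -, hT⟩ :=
    Finset.exists_subsuperset_card_eq S.subset_univ hS (by simpa using hmem.1)
  exact LinearIndepOn.mono (hmem.2 T hT) (Finset.coe_subset.mpr hST)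

theorem eq_zero_of_mulVec_eq_zero_of_ncard_le_kruskalRank {p L : ℕ}
    (A : Matrix (Fin p) (Fin L) ℂ) {s : Set (Fin L)} (hs : s.ncard ≤ kruskalRank A)
    {v : Fin L → ℂ} (hvs : ∀ k ∉ s, v k = 0) (hAv : A *ᵥ v = 0) : v = 0 := by
  classical
  refine eq_zero_of_mulVec_eq_zero_of_linearIndepOn
    (linearIndepOn_transpose_of_card_le_kruskalRank A (S := s.toFinset) ?_)
    (by simpa using hvs) hAv
  rwa [← Set.ncard_eq_toFinset_card']

theorem stmt3_general {p L : ℕ} (A : Matrix (Fin p) (Fin L) ℂ)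
    (Q : Matrix (Fin p) (Fin p) ℂ) (Z : Matrix (Fin L) (Fin L) ℂ)
    (hZ : Z.PosSemidef)
    (hEq : Q = A * Z * Aᴴ)
    (h : {k | Z k ≠ 0}.ncard ≤ kruskalRank A) :
    Z.rank = Q.rank := by
  obtain ⟨C, rfl⟩ : ∃ C : Matrix (Fin L) (Fin L) ℂ, Z = C * Cᴴ := by
    open scoped MatrixOrder in
    exact CStarAlgebra.nonneg_iff_eq_mul_star_self.mp hZ.nonneg
  have hQC : Q = (A * C) * (A * C)ᴴ := by
    rw [hEq, conjTranspose_mul]; simp only [Matrix.mul_assoc]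
  have hker : ∀ x, A *ᵥ (C *ᵥ x) = 0 → C *ᵥ x = 0 := fun x =>
    eq_zero_of_mulVec_eq_zero_of_ncard_le_kruskalRank A h fun k hk => by
      rw [mulVec, row_eq_zero_of_self_mul_conjTranspose_apply_self_eq_zero
        (congrFun (not_not.mp hk) k), zero_dotProduct]
  rw [hQC, rank_self_mul_conjTranspose, rank_self_mul_conjTranspose,
    rank_mul_eq_right_of_mulVec_eq_zero A C hker]

theorem stmt3 {p L : ℕ} (A : Matrix (Fin p) (Fin L) ℂ)
    (Q : Matrix (Fin p) (Fin p) ℂ) (Z : Matrix (Fin L) (Fin L) ℂ)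
    (hQ : Q.PosSemidef) (hZ : Z.PosSemidef)
    (hEq : Q = A * Z * Aᴴ)
    (h : {k | Z k ≠ 0}.ncard ≤ kruskalRank A) :
    Z.rank = Q.rank :=
  stmt3_general A Q Z hZ hEq h
end

section
/- Let A be a p×L complex matrix with Kruskal rank σ(A). Suppose U₀ is an L×r complex matrix with at most σ(A)/2 nonzero rows, and V = A·U₀. Then among all L×r matrices U satisfying V = A·U, the matrix U₀ has the minimal number of nonzero rows, and it is the unique matrix achieving this minimum. Moreover, any solution U with at most σ(A)/2 nonzero rows equals U₀. -/
/-!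
If `A U = A U₀`, the difference `U - U₀` lies in the kernel of `A` and has at most
`|I(U)| + |I(U₀)|` nonzero rows. When this is at most `σ(A)`, the columns of `A` that meet
those rows are linearly independent, so every column of `U - U₀` vanishes. Hence two solutions
with at most `σ(A)/2` nonzero rows each coincide, and any other solution has more nonzero rows
than `U₀`.
-/

open Matrix Set

namespace Matrix

variable {K m n o : Type*} [CommRing K] [Fintype n]

theorem eq_zero_of_mulVec_eq_zero_of_linearIndepOn_s9 {A : Matrix m n K} {T : Finset n}
    (hT : LinearIndepOn K (fun j => Aᵀ j) (T : Set n)) {x : n → K}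
    (hx : ∀ j ∉ T, x j = 0) (hAx : A *ᵥ x = 0) : x = 0 := by
  have hsum : ∑ j ∈ T, x j • Aᵀ j = 0 := by
    rw [Finset.sum_subset T.subset_univ fun j _ hj => by rw [hx j hj, zero_smul], ← hAx,
      mulVec_eq_sum]
    simp only [op_smul_eq_smul]
  funext j
  by_cases hj : j ∈ T
  · exact linearIndepOn_finset_iff.mp hT x hsum j hj
  · exact hx j hj

theorem eq_zero_of_mul_eq_zero_of_linearIndepOn {A : Matrix m n K} {T : Finset n}
    (hT : LinearIndepOn K (fun j => Aᵀ j) (T : Set n)) {W : Matrix n o K}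
    (hW : ∀ j ∉ T, W j = 0) (hAW : A * W = 0) : W = 0 := by
  ext j c
  have hcol : A *ᵥ (fun k => W k c) = 0 := funext fun i => congrFun (congrFun hAW i) c
  exact congrFun (eq_zero_of_mulVec_eq_zero_of_linearIndepOn_s9 hT
    (fun k hk => by rw [hW k hk, Pi.zero_apply]) hcol) j

end Matrix

theorem ncard_rows_ne_zero_sub_le {m n R : Type*} [Finite m] [AddGroup R]
    (U V : Matrix m n R) :
    {k | (U - V) k ≠ 0}.ncard ≤ {k | U k ≠ 0}.ncard + {k | V k ≠ 0}.ncard := by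
  have hsub : {k | (U - V) k ≠ 0} ⊆ {k | U k ≠ 0} ∪ {k | V k ≠ 0} := by
    intro k hk
    by_contra h
    simp only [mem_union, mem_ofPred_eq, not_or, not_not] at h
    exact hk (show U k - V k = 0 by rw [h.1, h.2, sub_zero])
  exact (ncard_le_ncard hsub (toFinite _)).trans (ncard_union_le _ _)

section KruskalRank

variable {p L : ℕ}

theorem kruskalRank_mem (A : Matrix (Fin p) (Fin L) ℂ) :
    kruskalRank A ≤ L ∧ ∀ S : Finset (Fin L), S.card = kruskalRank A →
      LinearIndependent ℂ (fun j : S => A.transpose (j : Fin L)) := by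
  show kruskalRank A ∈ {q | q ≤ L ∧ ∀ S : Finset (Fin L), S.card = q →
    LinearIndependent ℂ (fun j : S => A.transpose (j : Fin L))}
  refine Nat.sSup_mem ⟨0, Nat.zero_le L, fun S hS => ?_⟩ ⟨L, fun _ hq => And.left hq⟩
  rw [Finset.card_eq_zero.mp hS]
  exact linearIndependent_empty_type

theorem linearIndepOn_of_card_le_kruskalRank (A : Matrix (Fin p) (Fin L) ℂ)
    {S : Finset (Fin L)} (hS : S.card ≤ kruskalRank A) :
    LinearIndepOn ℂ (fun j => Aᵀ j) (S : Set (Fin L)) := by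
  obtain ⟨hle, hindep⟩ := kruskalRank_mem A
  obtain ⟨T, hST, hT⟩ := Finset.exists_superset_card_eq hS (by simpa using hle)
  exact LinearIndepOn.mono (hindep T hT) (Finset.coe_subset.mpr hST)

theorem eq_zero_of_mul_eq_zero_of_ncard_le_kruskalRank {o : Type*}
    {A : Matrix (Fin p) (Fin L) ℂ} {W : Matrix (Fin L) o ℂ} (hAW : A * W = 0)
    (hW : {k | W k ≠ 0}.ncard ≤ kruskalRank A) : W = 0 := by
  classical
  refine eq_zero_of_mul_eq_zero_of_linearIndepOn
    (linearIndepOn_of_card_le_kruskalRank A (S := {k | W k ≠ 0}.toFinset) ?_) ?_ hAW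
  · rwa [← ncard_eq_toFinset_card']
  · simp

end KruskalRank

theorem stmt9 {p L r : ℕ} (A : Matrix (Fin p) (Fin L) ℂ)
    (U0 : Matrix (Fin L) (Fin r) ℂ)
    (hU0 : 2 * {k | U0 k ≠ 0}.ncard ≤ kruskalRank A)
    (V : Matrix (Fin p) (Fin r) ℂ) (hV : V = A * U0) :
    (∀ U : Matrix (Fin L) (Fin r) ℂ, V = A * U → U ≠ U0 →
      {k | U0 k ≠ 0}.ncard < {k | U k ≠ 0}.ncard) ∧
    (∀ U : Matrix (Fin L) (Fin r) ℂ, V = A * U →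
      2 * {k | U k ≠ 0}.ncard ≤ kruskalRank A → U = U0) := by
  have unique : ∀ U : Matrix (Fin L) (Fin r) ℂ, V = A * U →
      2 * {k | U k ≠ 0}.ncard ≤ kruskalRank A → U = U0 := by
    intro U hVU hU
    refine sub_eq_zero.mp (eq_zero_of_mul_eq_zero_of_ncard_le_kruskalRank (A := A) ?_ ?_)
    · rw [Matrix.mul_sub, ← hVU, ← hV, sub_self]
    · have := ncard_rows_ne_zero_sub_le U U0
      omega
  refine ⟨fun U hVU hne => ?_, unique⟩
  by_contra! hle
  exact hne (unique U hVU (by omega))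
end
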